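/- arXiv:2110.10972 — 2 statements merged into one kernel-verified Lean document; each statement's English description precedes it below -/
import Mathlib

section
/- For probability measures μ, ν on ℝ^d with finite second moments both supported on the same line through the origin (the first coordinate axis), the squared sliced-Wasserstein distance equals the squared Wasserstein distance divided by d: SW₂²(μ,ν) = W₂²(μ,ν)/d. -/
open MeasureTheory Metric ProbabilityTheory
open scoped ENNReal NNReal RealInnerProductSpace Topology

noncomputable section

abbrev Euc (d : ℕ) := EuclideanSpace ℝ (Fin d)

/-- Squared 2-Wasserstein distance (infimum over couplings). -/
def W2sq {X : Type*} [NormedAddCommGroup X] [MeasurableSpace X] (μ ν : Measure X) : ℝ≥0∞ :=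
  ⨅ γ ∈ {γ : Measure (X × X) | γ.map Prod.fst = μ ∧ γ.map Prod.snd = ν},
    ∫⁻ p, ENNReal.ofReal (‖p.1 - p.2‖ ^ 2) ∂γ

/-- 2-Wasserstein distance. -/
def W2 {X : Type*} [NormedAddCommGroup X] [MeasurableSpace X] (μ ν : Measure X) : ℝ :=
  Real.sqrt (W2sq μ ν).toReal

/-- Projection onto direction θ. -/
def proj {d : ℕ} (θ : Euc d) (x : Euc d) : ℝ := ⟪θ, x⟫

/-- Uniform probability measure on the unit sphere (normalized Hausdorff measure). -/
def sphereUniform (d : ℕ) : Measure (Euc d) :=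
  (μH[(d : ℝ) - 1] (sphere (0 : Euc d) 1))⁻¹ •
    (μH[(d : ℝ) - 1]).restrict (sphere (0 : Euc d) 1)

/-- Squared sliced-Wasserstein distance. -/
def SW2sq {d : ℕ} (μ ν : Measure (Euc d)) : ℝ≥0∞ :=
  ∫⁻ θ, W2sq (μ.map (proj θ)) (ν.map (proj θ)) ∂(sphereUniform d)

/-- Sliced-Wasserstein distance. -/
def SW2 {d : ℕ} (μ ν : Measure (Euc d)) : ℝ := Real.sqrt (SW2sq μ ν).toReal

/-- Gaussian on ℝ^d with diagonal covariance D. -/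
def diagGaussian {d : ℕ} (m : Euc d) (D : Fin d → ℝ≥0) : Measure (Euc d) :=
  (Measure.pi fun i => gaussianReal (m i) (D i)).map
    (MeasurableEquiv.toLp 2 (Fin d → ℝ))

/-- Isotropic Gaussian N(m, v I_d) (v the common variance). -/
def isoGaussian {d : ℕ} (m : Euc d) (v : ℝ≥0) : Measure (Euc d) :=
  diagGaussian m fun _ => v

/-- Mean of a measure on ℝ^d. -/
def meanOf {d : ℕ} (μ : Measure (Euc d)) : Euc d := ∫ x, x ∂μ

/-- Centered version of a measure. -/
def centered {d : ℕ} (μ : Measure (Euc d)) : Measure (Euc d) :=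
  μ.map fun x => x - meanOf μ

/-- Quantile function (generalized inverse cdf). -/
def quantile (μ : Measure ℝ) (z : ℝ) : ℝ := sInf {x | z ≤ cdf μ x}

/-- Embedding of ℝ as the first coordinate axis of ℝ^d. -/
def axisEmbed (d : ℕ) [NeZero d] (t : ℝ) : Euc d := EuclideanSpace.single 0 t

/-- Probability measures supported in K. -/
def InP {d : ℕ} (K : Set (Euc d)) (μ : Measure (Euc d)) : Prop :=
  IsProbabilityMeasure μ ∧ μ Kᶜ = 0

/-- The SW-JKO objective. -/
def JJ {d : ℕ} (τ : ℝ) (μk : Measure (Euc d)) (F : Measure (Euc d) → ℝ)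
    (μ : Measure (Euc d)) : ℝ :=
  (SW2sq μ μk).toReal / (2 * τ) + F μ

/-!
The projection of `μ₁ ⊗ δ₀` onto a direction `θ` is the image of `μ₁` under `t ↦ θ₀ t`, so the
squared distance between the projections is `θ₀² W₂²(μ₁, ν₁)`; and since the axis embedding is an
isometry with a 1-Lipschitz left inverse, `W₂²(μ, ν) = W₂²(μ₁, ν₁)`. It remains to see that
`∫ θ₀² dλ = 1/d`: the uniform measure is invariant under coordinate permutations and `∑ θᵢ² = 1`
on the sphere. That `λ` is a probability measure, i.e. that the sphere has positive finite
`(d-1)`-dimensional Hausdorff measure, follows from the 1-Lipschitz projection of the sphere onto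
the unit ball of `ℝ^(d-1)` and from covering the sphere by finitely many isometric copies of a
cap `{x₀ ≥ δ}`, which is a Lipschitz graph over a subset of that ball.
-/

section Wasserstein

variable {X Y : Type*} [NormedAddCommGroup X] [MeasurableSpace X]
  [NormedAddCommGroup Y] [MeasurableSpace Y]

lemma W2sq_le_of_coupling {μ ν : Measure X} (γ : Measure (X × X))
    (h₁ : γ.map Prod.fst = μ) (h₂ : γ.map Prod.snd = ν) :
    W2sq μ ν ≤ ∫⁻ p, ENNReal.ofReal (‖p.1 - p.2‖ ^ 2) ∂γ :=
  iInf₂_le γ ⟨h₁, h₂⟩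

lemma W2sq_self (μ : Measure X) : W2sq μ μ = 0 := by
  have hdiag : Measurable fun x : X => (x, x) := measurable_id.prodMk measurable_id
  have hmarg : ∀ {π : X × X → X}, Measurable π → (π ∘ fun x => (x, x)) = id →
      (μ.map fun x => (x, x)).map π = μ := fun hπ h => by
    rw [Measure.map_map hπ hdiag, h, Measure.map_id]
  refine le_antisymm ((W2sq_le_of_coupling _ (hmarg measurable_fst rfl)
    (hmarg measurable_snd rfl)).trans ((lintegral_map_le _ _).trans ?_)) zero_le
  simp

lemma W2sq_map_le {μ ν : Measure X} {f : X → Y} (hf : Measurable f) {c : ℝ} (hc : 0 < c)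
    (hfc : ∀ x y, ‖f x - f y‖ ^ 2 ≤ c * ‖x - y‖ ^ 2) :
    W2sq (μ.map f) (ν.map f) ≤ ENNReal.ofReal c * W2sq μ ν := by
  have hff : Measurable (Prod.map f f) := hf.prodMap hf
  simp_rw [W2sq, ENNReal.mul_iInf_of_ne (ENNReal.ofReal_pos.2 hc).ne' ENNReal.ofReal_ne_top]
  refine le_iInf₂ fun γ ⟨h₁, h₂⟩ => ?_
  refine (W2sq_le_of_coupling (γ.map (Prod.map f f)) ?_ ?_).trans ?_
  · rw [Measure.map_map measurable_fst hff, ← h₁, Measure.map_map hf measurable_fst]; rfl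
  · rw [Measure.map_map measurable_snd hff, ← h₂, Measure.map_map hf measurable_snd]; rfl
  calc ∫⁻ p, ENNReal.ofReal (‖p.1 - p.2‖ ^ 2) ∂(γ.map (Prod.map f f))
      ≤ ∫⁻ p, ENNReal.ofReal (‖f p.1 - f p.2‖ ^ 2) ∂γ := lintegral_map_le _ _
    _ ≤ ∫⁻ p, ENNReal.ofReal c * ENNReal.ofReal (‖p.1 - p.2‖ ^ 2) ∂γ := by
      refine lintegral_mono fun p => ?_
      rw [← ENNReal.ofReal_mul hc.le]
      exact ENNReal.ofReal_le_ofReal (hfc _ _)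
    _ = ENNReal.ofReal c * ∫⁻ p, ENNReal.ofReal (‖p.1 - p.2‖ ^ 2) ∂γ :=
      lintegral_const_mul' _ _ ENNReal.ofReal_ne_top

lemma W2sq_map_eq_of_leftInverse {μ ν : Measure X} {f : X → Y} {g : Y → X}
    (hf : Measurable f) (hg : Measurable g) (hgf : Function.LeftInverse g f) {c : ℝ} (hc : 0 < c)
    (hfc : ∀ x y, ‖f x - f y‖ ^ 2 ≤ c * ‖x - y‖ ^ 2)
    (hgc : ∀ x y, ‖g x - g y‖ ^ 2 ≤ c⁻¹ * ‖x - y‖ ^ 2) :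
    W2sq (μ.map f) (ν.map f) = ENNReal.ofReal c * W2sq μ ν := by
  have hback : ∀ ρ : Measure X, (ρ.map f).map g = ρ := fun ρ => by
    rw [Measure.map_map hg hf, hgf.comp_eq_id, Measure.map_id]
  refine le_antisymm (W2sq_map_le hf hc hfc) ?_
  calc ENNReal.ofReal c * W2sq μ ν
      = ENNReal.ofReal c * W2sq ((μ.map f).map g) ((ν.map f).map g) := by rw [hback, hback]
    _ ≤ ENNReal.ofReal c * (ENNReal.ofReal c⁻¹ * W2sq (μ.map f) (ν.map f)) := by
      gcongr; exact W2sq_map_le hg (inv_pos.2 hc) hgc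
    _ = W2sq (μ.map f) (ν.map f) := by
      rw [← mul_assoc, ← ENNReal.ofReal_mul hc.le, mul_inv_cancel₀ hc.ne', ENNReal.ofReal_one,
        one_mul]

end Wasserstein

section Scaling

variable {E : Type*} [NormedAddCommGroup E] [NormedSpace ℝ E] [MeasurableSpace E]
  [BorelSpace E]

lemma W2sq_map_const_smul (μ ν : Measure E) [IsProbabilityMeasure μ] [IsProbabilityMeasure ν]
    (a : ℝ) :
    W2sq (μ.map (a • ·)) (ν.map (a • ·)) = ENNReal.ofReal (a ^ 2) * W2sq μ ν := by
  rcases eq_or_ne a 0 with rfl | ha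
  · simp only [zero_smul, Measure.map_const, measure_univ, one_smul, W2sq_self]
    simp
  have hscale : ∀ b : ℝ, ∀ x y : E, ‖b • x - b • y‖ ^ 2 = b ^ 2 * ‖x - y‖ ^ 2 := fun b x y => by
    rw [← smul_sub, norm_smul, mul_pow, Real.norm_eq_abs, sq_abs]
  refine W2sq_map_eq_of_leftInverse (measurable_const_smul a) (measurable_const_smul a⁻¹)
    (fun x => inv_smul_smul₀ ha x) (by positivity) (fun x y => (hscale a x y).le)
    (fun x y => ?_)
  rw [hscale, inv_pow]

end Scaling

section Axis

variable {d : ℕ} [NeZero d]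

lemma isometry_axisEmbed : Isometry (axisEmbed d) :=
  Isometry.of_dist_eq fun _ _ => PiLp.dist_single_same 2 (fun _ => ℝ) 0 _ _

lemma W2sq_map_axisEmbed (μ ν : Measure ℝ) :
    W2sq (μ.map (axisEmbed d)) (ν.map (axisEmbed d)) = W2sq μ ν := by
  have h := W2sq_map_eq_of_leftInverse (μ := μ) (ν := ν) isometry_axisEmbed.continuous.measurable
    (g := fun x : Euc d => x 0) (by fun_prop) (PiLp.single_eq_same 2 (β := fun _ => ℝ) 0) one_pos
    (fun x y => by rw [← dist_eq_norm, ← dist_eq_norm, isometry_axisEmbed.dist_eq, one_mul])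
    (fun x y => by
      rw [inv_one, one_mul, ← PiLp.sub_apply]
      exact pow_le_pow_left₀ (norm_nonneg _) (PiLp.norm_apply_le _ _) 2)
  rwa [ENNReal.ofReal_one, one_mul] at h

lemma map_proj_map_axisEmbed (θ : Euc d) (μ : Measure ℝ) :
    (μ.map (axisEmbed d)).map (proj θ) = μ.map (θ 0 • ·) := by
  have hproj : Measurable (proj θ) := (continuous_const.inner continuous_id).measurable
  rw [Measure.map_map hproj isometry_axisEmbed.continuous.measurable]
  congr 1
  funext t
  simp [proj, axisEmbed, EuclideanSpace.inner_single_right, mul_comm]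

end Axis

namespace EuclideanSpace

variable {e : ℕ}

def tail (x : Euc (e + 1)) : Euc e := WithLp.toLp 2 (Fin.tail x.ofLp)

def cons (r : ℝ) (y : Euc e) : Euc (e + 1) := WithLp.toLp 2 (Fin.cons r y.ofLp)

@[simp] lemma cons_zero (r : ℝ) (y : Euc e) : cons r y 0 = r := rfl

@[simp] lemma tail_cons (r : ℝ) (y : Euc e) : tail (cons r y) = y := rfl

lemma cons_sub_cons (r s : ℝ) (y z : Euc e) : cons r y - cons s z = cons (r - s) (y - z) := by
  ext j
  exact Fin.cases rfl (fun _ => rfl) j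

lemma norm_sq_eq_sq_add_norm_tail_sq (x : Euc (e + 1)) : ‖x‖ ^ 2 = x 0 ^ 2 + ‖tail x‖ ^ 2 := by
  simp only [EuclideanSpace.real_norm_sq_eq, Fin.sum_univ_succ]
  rfl

lemma norm_cons_sq (r : ℝ) (y : Euc e) : ‖cons r y‖ ^ 2 = r ^ 2 + ‖y‖ ^ 2 := by
  rw [norm_sq_eq_sq_add_norm_tail_sq, cons_zero, tail_cons]

lemma norm_cons_le (r : ℝ) (y : Euc e) : ‖cons r y‖ ≤ |r| + ‖y‖ := by
  refine le_of_pow_le_pow_left₀ two_ne_zero (by positivity) ?_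
  rw [norm_cons_sq]
  nlinarith [abs_nonneg r, norm_nonneg y, sq_abs r]

lemma lipschitzWith_tail : LipschitzWith 1 (tail (e := e)) := by
  refine LipschitzWith.of_dist_le_mul fun x y => ?_
  rw [NNReal.coe_one, one_mul, dist_eq_norm, dist_eq_norm]
  refine le_of_pow_le_pow_left₀ two_ne_zero (norm_nonneg _) ?_
  rw [norm_sq_eq_sq_add_norm_tail_sq (x - y)]
  exact le_add_of_nonneg_left (sq_nonneg _)

end EuclideanSpace

section Hemisphere

open EuclideanSpace

variable {e : ℕ}

def hemisphereGraph (y : Euc e) : Euc (e + 1) := cons (√(1 - ‖y‖ ^ 2)) y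

lemma hemisphereGraph_mem_sphere {y : Euc e} (hy : ‖y‖ ≤ 1) :
    hemisphereGraph y ∈ sphere (0 : Euc (e + 1)) 1 := by
  have hy2 : ‖y‖ ^ 2 ≤ 1 := pow_le_one₀ (norm_nonneg y) hy
  rw [mem_sphere_zero_iff_norm, ← pow_eq_one_iff_of_nonneg (norm_nonneg _) two_ne_zero,
    hemisphereGraph, norm_cons_sq, Real.sq_sqrt (by linarith)]
  ring

lemma sphere_inter_le_apply_zero_subset_image_hemisphereGraph {δ : ℝ} (hδ : 0 ≤ δ) :
    sphere (0 : Euc (e + 1)) 1 ∩ {x | δ ≤ x 0} ⊆ hemisphereGraph '' {y | δ ^ 2 ≤ 1 - ‖y‖ ^ 2} := by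
  rintro x ⟨hx, hδx : δ ≤ x 0⟩
  have hnorm := norm_sq_eq_sq_add_norm_tail_sq x
  rw [mem_sphere_zero_iff_norm.1 hx, one_pow] at hnorm
  refine ⟨tail x, ?_, ?_⟩
  · change δ ^ 2 ≤ 1 - ‖tail x‖ ^ 2
    nlinarith
  · ext j
    refine Fin.cases ?_ (fun _ => rfl) j
    change √(1 - ‖tail x‖ ^ 2) = x 0
    rw [show 1 - ‖tail x‖ ^ 2 = x 0 ^ 2 by linarith, Real.sqrt_sq (hδ.trans hδx)]

lemma lipschitzOnWith_hemisphereGraph {δ : ℝ} (hδ : 0 < δ) :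
    LipschitzOnWith (δ⁻¹ + 1).toNNReal hemisphereGraph {y : Euc e | δ ^ 2 ≤ 1 - ‖y‖ ^ 2} := by
  refine LipschitzOnWith.of_dist_le' fun y hy z hz => ?_
  change δ ^ 2 ≤ 1 - ‖y‖ ^ 2 at hy
  change δ ^ 2 ≤ 1 - ‖z‖ ^ 2 at hz
  set a := √(1 - ‖y‖ ^ 2)
  set b := √(1 - ‖z‖ ^ 2)
  have ha : δ ≤ a := Real.le_sqrt_of_sq_le hy
  have hb : δ ≤ b := Real.le_sqrt_of_sq_le hz
  have hab : (a - b) * (a + b) = (‖z‖ - ‖y‖) * (‖z‖ + ‖y‖) := by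
    have := Real.sq_sqrt (show 0 ≤ 1 - ‖y‖ ^ 2 by nlinarith)
    have := Real.sq_sqrt (show 0 ≤ 1 - ‖z‖ ^ 2 by nlinarith)
    nlinarith
  have hyz : |‖z‖ - ‖y‖| ≤ ‖y - z‖ := by rw [abs_sub_comm]; exact abs_norm_sub_norm_le y z
  have hsum : ‖z‖ + ‖y‖ ≤ 2 := by
    have hy1 := (sq_le_one_iff₀ (norm_nonneg y)).1 (by nlinarith)
    have hz1 := (sq_le_one_iff₀ (norm_nonneg z)).1 (by nlinarith)
    linarith
  have hlip : |a - b| ≤ δ⁻¹ * ‖y - z‖ := by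
    rw [inv_mul_eq_div, le_div_iff₀ hδ]
    have := congrArg abs hab
    rw [abs_mul, abs_mul, abs_of_pos (by linarith : 0 < a + b),
      abs_of_nonneg (by positivity : 0 ≤ ‖z‖ + ‖y‖)] at this
    nlinarith [abs_nonneg (a - b), abs_nonneg (‖z‖ - ‖y‖), norm_nonneg (y - z)]
  rw [dist_eq_norm, dist_eq_norm, hemisphereGraph, hemisphereGraph, cons_sub_cons]
  calc ‖cons (a - b) (y - z)‖ ≤ |a - b| + ‖y - z‖ := norm_cons_le _ _
    _ ≤ (δ⁻¹ + 1) * ‖y - z‖ := by linarith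

end Hemisphere

section SphereMeasure

open EuclideanSpace

variable {e : ℕ}

lemma hausdorffMeasure_sphere_inter_le_apply_zero_lt_top {δ : ℝ} (hδ : 0 < δ) :
    μH[e] (sphere (0 : Euc (e + 1)) 1 ∩ {x | δ ≤ x 0}) < ∞ := by
  have hdom : {y : Euc e | δ ^ 2 ≤ 1 - ‖y‖ ^ 2} ⊆ closedBall 0 1 := by
    intro y (hy : δ ^ 2 ≤ 1 - ‖y‖ ^ 2)
    exact mem_closedBall_zero_iff.2 <| (sq_le_one_iff₀ (norm_nonneg y)).1 (by nlinarith)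
  calc _ ≤ μH[e] (hemisphereGraph '' {y : Euc e | δ ^ 2 ≤ 1 - ‖y‖ ^ 2}) :=
        measure_mono (sphere_inter_le_apply_zero_subset_image_hemisphereGraph hδ.le)
    _ ≤ (δ⁻¹ + 1).toNNReal ^ (e : ℝ) * μH[e] {y : Euc e | δ ^ 2 ≤ 1 - ‖y‖ ^ 2} :=
        (lipschitzOnWith_hemisphereGraph hδ).hausdorffMeasure_image_le (Nat.cast_nonneg e)
    _ ≤ (δ⁻¹ + 1).toNNReal ^ (e : ℝ) * μH[e] (closedBall (0 : Euc e) 1) := by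
        gcongr
    _ < ∞ := ENNReal.mul_lt_top (by simp) (isCompact_closedBall _ _).measure_lt_top

lemma exists_le_abs_apply_of_norm_eq_one {x : Euc (e + 1)} (hx : ‖x‖ = 1) :
    ∃ i, √((e + 1 : ℝ)⁻¹) ≤ |x i| := by
  have hsum : ∑ _i : Fin (e + 1), ((e + 1 : ℝ))⁻¹ ≤ ∑ i, x i ^ 2 := by
    rw [← EuclideanSpace.real_norm_sq_eq, hx]
    simp [field]
  obtain ⟨i, -, hi⟩ := Finset.exists_le_of_sum_le Finset.univ_nonempty hsum
  exact ⟨i, Real.sqrt_sq_eq_abs (x i) ▸ Real.sqrt_le_sqrt hi⟩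

lemma hausdorffMeasure_sphere_lt_top : μH[e] (sphere (0 : Euc (e + 1)) 1) < ∞ := by
  set δ := √((e + 1 : ℝ)⁻¹)
  set C := sphere (0 : Euc (e + 1)) 1 ∩ {x | δ ≤ x 0}
  let swap : Fin (e + 1) → Euc (e + 1) ≃ᵢ Euc (e + 1) := fun i =>
    (LinearIsometryEquiv.piLpCongrLeft 2 ℝ ℝ (Equiv.swap 0 i)).toIsometryEquiv
  have hcover : sphere (0 : Euc (e + 1)) 1 ⊆ ⋃ i, (swap i ⁻¹' C ∪ swap i ⁻¹' (-C)) := by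
    intro x hx
    obtain ⟨i, hi⟩ := exists_le_abs_apply_of_norm_eq_one (mem_sphere_zero_iff_norm.1 hx)
    have hswap : swap i x ∈ sphere 0 1 := by simpa [swap] using hx
    have hswap0 : swap i x 0 = x i := by simp [swap]
    rcases le_abs.1 hi with h | h
    · exact Set.mem_iUnion.2 ⟨i, Or.inl ⟨hswap, show δ ≤ swap i x 0 from hswap0 ▸ h⟩⟩
    · refine Set.mem_iUnion.2 ⟨i, Or.inr ⟨by simpa using hswap, ?_⟩⟩
      show δ ≤ -swap i x 0
      rwa [hswap0]
  have hC : μH[e] C < ∞ := hausdorffMeasure_sphere_inter_le_apply_zero_lt_top (by positivity)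
  refine (measure_mono hcover).trans_lt <| (measure_iUnion_fintype_le _ _).trans_lt <|
    ENNReal.sum_lt_top.2 fun i _ => (measure_union_le _ _).trans_lt ?_
  have hnegC : μH[e] (-C) = μH[e] C :=
    (IsometryEquiv.neg (Euc (e + 1))).hausdorffMeasure_preimage _ C
  rw [IsometryEquiv.hausdorffMeasure_preimage, IsometryEquiv.hausdorffMeasure_preimage, hnegC]
  exact ENNReal.add_lt_top.2 ⟨hC, hC⟩

lemma hausdorffMeasure_sphere_pos : 0 < μH[e] (sphere (0 : Euc (e + 1)) 1) := by
  have hball : closedBall (0 : Euc e) 1 ⊆ tail '' sphere 0 1 := fun y hy =>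
    ⟨hemisphereGraph y, hemisphereGraph_mem_sphere (mem_closedBall_zero_iff.1 hy), tail_cons _ _⟩
  calc 0 < μH[e] (closedBall (0 : Euc e) 1) := measure_closedBall_pos _ _ one_pos
    _ ≤ μH[e] (tail '' sphere (0 : Euc (e + 1)) 1) := measure_mono hball
    _ ≤ μH[e] (sphere (0 : Euc (e + 1)) 1) := by
        simpa using lipschitzWith_tail.hausdorffMeasure_image_le (Nat.cast_nonneg e) _

end SphereMeasure

section SphereUniform

variable {d : ℕ}

instance [NeZero d] : IsProbabilityMeasure (sphereUniform d) := by
  obtain ⟨e, rfl⟩ := Nat.exists_eq_succ_of_ne_zero (NeZero.ne d)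
  have hexp : ((e + 1 : ℕ) : ℝ) - 1 = e := by push_cast; ring
  constructor
  rw [sphereUniform, Measure.smul_apply, Measure.restrict_apply_univ, hexp, smul_eq_mul,
    ENNReal.inv_mul_cancel hausdorffMeasure_sphere_pos.ne' hausdorffMeasure_sphere_lt_top.ne]

lemma map_sphereUniform (E : Euc d ≃ₗᵢ[ℝ] Euc d) : (sphereUniform d).map E = sphereUniform d := by
  have hsphere : E ⁻¹' sphere 0 1 = sphere 0 1 := by
    rw [E.preimage_sphere, map_zero]
  have hH : ∀ s : ℝ, μH[s].map E = μH[s] := E.toIsometryEquiv.map_hausdorffMeasure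
  rw [sphereUniform, Measure.map_smul]
  congr 1
  conv_lhs => rw [← hsphere]
  rw [← Measure.restrict_map E.continuous.measurable isClosed_sphere.measurableSet, hH]

lemma ae_mem_sphere_sphereUniform : ∀ᵐ θ ∂(sphereUniform d), θ ∈ sphere (0 : Euc d) 1 :=
  Measure.ae_smul_measure (ae_restrict_mem isClosed_sphere.measurableSet) _

lemma lintegral_sq_apply_sphereUniform [NeZero d] (i : Fin d) :
    ∫⁻ θ, ENNReal.ofReal (θ i ^ 2) ∂(sphereUniform d) = (d : ℝ≥0∞)⁻¹ := by
  have hmeas : ∀ j : Fin d, Measurable fun θ : Euc d => ENNReal.ofReal (θ j ^ 2) := by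
    intro j; fun_prop
  have hsymm : ∀ j, ∫⁻ θ, ENNReal.ofReal (θ j ^ 2) ∂(sphereUniform d)
      = ∫⁻ θ, ENNReal.ofReal (θ i ^ 2) ∂(sphereUniform d) := by
    intro j
    let E := LinearIsometryEquiv.piLpCongrLeft 2 ℝ ℝ (Equiv.swap j i)
    conv_lhs => rw [← map_sphereUniform E]
    rw [lintegral_map (hmeas j) E.continuous.measurable]
    simp [E]
  have hsum : ∑ j, ∫⁻ θ, ENNReal.ofReal (θ j ^ 2) ∂(sphereUniform d) = 1 := by
    rw [← lintegral_finsetSum _ fun j _ => hmeas j, ← measure_univ (μ := sphereUniform d),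
      ← lintegral_one]
    refine lintegral_congr_ae (ae_mem_sphere_sphereUniform.mono fun θ hθ => ?_)
    change ∑ j, ENNReal.ofReal (θ j ^ 2) = 1
    rw [← ENNReal.ofReal_sum_of_nonneg fun j _ => sq_nonneg _, ← EuclideanSpace.real_norm_sq_eq,
      mem_sphere_zero_iff_norm.1 hθ]
    simp
  rw [Finset.sum_congr rfl fun j _ => hsymm j, Finset.sum_const, Finset.card_univ,
    Fintype.card_fin, nsmul_eq_mul, mul_comm] at hsum
  exact ENNReal.eq_inv_of_mul_eq_one_left hsum

end SphereUniform

theorem stmt2_general {d : ℕ} [NeZero d] (μ₁ ν₁ : Measure ℝ)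
    [IsProbabilityMeasure μ₁] [IsProbabilityMeasure ν₁] :
    SW2sq (μ₁.map (axisEmbed d)) (ν₁.map (axisEmbed d))
      = W2sq (μ₁.map (axisEmbed d)) (ν₁.map (axisEmbed d)) / (d : ℝ≥0∞) := by
  have hslice : ∀ θ : Euc d, W2sq ((μ₁.map (axisEmbed d)).map (proj θ))
      ((ν₁.map (axisEmbed d)).map (proj θ)) = ENNReal.ofReal (θ 0 ^ 2) * W2sq μ₁ ν₁ := by
    intro θ
    rw [map_proj_map_axisEmbed, map_proj_map_axisEmbed, W2sq_map_const_smul]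
  rw [SW2sq, lintegral_congr hslice, lintegral_mul_const _ (by fun_prop),
    lintegral_sq_apply_sphereUniform, W2sq_map_axisEmbed, div_eq_mul_inv, mul_comm]

theorem stmt2 {d : ℕ} [NeZero d] (μ₁ ν₁ : Measure ℝ)
    [IsProbabilityMeasure μ₁] [IsProbabilityMeasure ν₁]
    (h2μ : ∫⁻ x, ENNReal.ofReal (x ^ 2) ∂μ₁ < ∞)
    (h2ν : ∫⁻ x, ENNReal.ofReal (x ^ 2) ∂ν₁ < ∞) :
    SW2sq (μ₁.map (axisEmbed d)) (ν₁.map (axisEmbed d))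
      = W2sq (μ₁.map (axisEmbed d)) (ν₁.map (axisEmbed d)) / (d : ℝ≥0∞) :=
  stmt2_general μ₁ ν₁
end
end

section
/- For all μ, ν ∈ 𝒫₂(ℝ^d), SW₂²(μ,ν) ≤ (1/d) W₂²(μ,ν). -/
open MeasureTheory Metric ProbabilityTheory
open scoped ENNReal NNReal RealInnerProductSpace Topology

noncomputable section

/-! Every coupling `γ` of `μ` and `ν` projects, for each direction `θ`, to a coupling of the
one-dimensional marginals, so `W₂²(θ_#μ, θ_#ν) ≤ ∫ ⟪θ, x - y⟫² dγ`. Averaging over the sphere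
and exchanging the integrals, it remains to see that `d ∫ ⟪θ, v⟫² dλ(θ) ≤ ‖v‖²`. By rotation
invariance of `λ` the integral depends only on `‖v‖`, so `d` times it is the sum over the
vectors `‖v‖ eᵢ`, and `∑ᵢ ⟪θ, ‖v‖ eᵢ⟫² = ‖v‖² ‖θ‖² = ‖v‖²` on the sphere. -/

theorem W2sq_map_le_s7 {X Y : Type*} [NormedAddCommGroup X] [MeasurableSpace X]
    [NormedAddCommGroup Y] [MeasurableSpace Y] {μ ν : Measure X} {γ : Measure (X × X)}
    (hγ₁ : γ.map Prod.fst = μ) (hγ₂ : γ.map Prod.snd = ν) {f : X → Y} (hf : Measurable f) :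
    W2sq (μ.map f) (ν.map f) ≤ ∫⁻ p, ENNReal.ofReal (‖f p.1 - f p.2‖ ^ 2) ∂γ := by
  have hff : Measurable (Prod.map f f) := hf.prodMap hf
  have hcoupling : (γ.map (Prod.map f f)).map Prod.fst = μ.map f ∧
      (γ.map (Prod.map f f)).map Prod.snd = ν.map f := by
    rw [Measure.map_map measurable_fst hff, Measure.map_map measurable_snd hff,
      ← hγ₁, ← hγ₂, Measure.map_map hf measurable_fst, Measure.map_map hf measurable_snd]
    exact ⟨rfl, rfl⟩
  exact (iInf₂_le (γ.map (Prod.map f f)) hcoupling).trans (lintegral_map_le _ _)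

theorem sphereUniform_zero : sphereUniform 0 = 0 := by
  have hsphere : sphere (0 : Euc 0) 1 = ∅ := by
    ext x
    simp [Subsingleton.elim x 0]
  simp [sphereUniform, hsphere]

theorem sphereUniform_univ_le_one (d : ℕ) : sphereUniform d Set.univ ≤ 1 := by
  rw [sphereUniform, Measure.smul_apply, Measure.restrict_apply_univ, smul_eq_mul]
  exact ENNReal.inv_mul_le_one _

instance isFiniteMeasure_sphereUniform (d : ℕ) : IsFiniteMeasure (sphereUniform d) :=
  ⟨(sphereUniform_univ_le_one d).trans_lt ENNReal.one_lt_top⟩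

theorem lintegral_norm_sq_sphereUniform_le_one (d : ℕ) :
    ∫⁻ θ, ENNReal.ofReal (‖θ‖ ^ 2) ∂(sphereUniform d) ≤ 1 := by
  have hnorm : ∀ θ ∈ sphere (0 : Euc d) 1, ENNReal.ofReal (‖θ‖ ^ 2) = 1 := by
    intro θ hθ
    simp [mem_sphere_zero_iff_norm.mp hθ]
  rw [sphereUniform, lintegral_smul_measure, setLIntegral_congr_fun isClosed_sphere.measurableSet
    hnorm, setLIntegral_one, smul_eq_mul]
  exact ENNReal.inv_mul_le_one _

theorem sphereUniform_map_linearIsometryEquiv {d : ℕ} (A : Euc d ≃ₗᵢ[ℝ] Euc d) :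
    (sphereUniform d).map A = sphereUniform d := by
  have hA : MeasurableEmbedding A := A.toHomeomorph.measurableEmbedding
  have hpre : A ⁻¹' sphere (0 : Euc d) 1 = sphere 0 1 := by
    ext x
    simp
  rw [sphereUniform, Measure.map_smul, ← hpre, ← hA.restrict_map,
    A.isometry.map_hausdorffMeasure (Or.inr A.surjective), A.surjective.range_eq,
    Measure.restrict_univ, hpre]

theorem lintegral_inner_sq_sphereUniform_congr {d : ℕ} {v w : Euc d} (h : ‖v‖ = ‖w‖) :
    ∫⁻ θ, ENNReal.ofReal (⟪θ, v⟫ ^ 2) ∂(sphereUniform d)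
      = ∫⁻ θ, ENNReal.ofReal (⟪θ, w⟫ ^ 2) ∂(sphereUniform d) := by
  obtain ⟨R, hRv, hRR⟩ : ∃ R : Euc d ≃ₗᵢ[ℝ] Euc d, R v = w ∧ ∀ x, R (R x) = x :=
    ⟨_, Submodule.reflection_sub h, Submodule.reflection_reflection _⟩
  have hR : ∀ θ, ⟪R θ, v⟫ = ⟪θ, w⟫ := fun θ => by
    rw [← hRv, ← R.inner_map_map, hRR]
  calc ∫⁻ θ, ENNReal.ofReal (⟪θ, v⟫ ^ 2) ∂(sphereUniform d)
      = ∫⁻ θ, ENNReal.ofReal (⟪θ, v⟫ ^ 2) ∂((sphereUniform d).map R) := by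
        rw [sphereUniform_map_linearIsometryEquiv]
    _ = ∫⁻ θ, ENNReal.ofReal (⟪θ, w⟫ ^ 2) ∂(sphereUniform d) := by
        rw [lintegral_map (by fun_prop) R.continuous.measurable]
        simp_rw [hR]

theorem natCast_mul_lintegral_inner_sq_sphereUniform_le {d : ℕ} (v : Euc d) :
    d * ∫⁻ θ, ENNReal.ofReal (⟪θ, v⟫ ^ 2) ∂(sphereUniform d) ≤ ENNReal.ofReal (‖v‖ ^ 2) := by
  set e := EuclideanSpace.basisFun (Fin d) ℝ
  have he : ∀ i, ‖‖v‖ • e i‖ = ‖v‖ := fun i => by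
    rw [norm_smul, e.orthonormal.1 i, norm_norm, mul_one]
  have hsum : ∀ θ : Euc d, ∑ i, ⟪θ, ‖v‖ • e i⟫ ^ 2 = ‖v‖ ^ 2 * ‖θ‖ ^ 2 := fun θ => by
    simp_rw [real_inner_smul_right, mul_pow, ← Finset.mul_sum, e.sum_sq_inner_left]
  calc (d : ℝ≥0∞) * ∫⁻ θ, ENNReal.ofReal (⟪θ, v⟫ ^ 2) ∂(sphereUniform d)
      = ∑ i, ∫⁻ θ, ENNReal.ofReal (⟪θ, ‖v‖ • e i⟫ ^ 2) ∂(sphereUniform d) := by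
        simp_rw [lintegral_inner_sq_sphereUniform_congr (he _), Finset.sum_const,
          Finset.card_univ, Fintype.card_fin, nsmul_eq_mul]
    _ = ∫⁻ θ, ENNReal.ofReal (‖v‖ ^ 2) * ENNReal.ofReal (‖θ‖ ^ 2) ∂(sphereUniform d) := by
        rw [← lintegral_finsetSum _ fun i _ => by fun_prop]
        refine lintegral_congr fun θ => ?_
        rw [← ENNReal.ofReal_sum_of_nonneg fun i _ => sq_nonneg _, hsum,
          ENNReal.ofReal_mul (sq_nonneg _)]
    _ ≤ ENNReal.ofReal (‖v‖ ^ 2) := by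
        rw [lintegral_const_mul _ (by fun_prop)]
        exact mul_le_of_le_one_right' (lintegral_norm_sq_sphereUniform_le_one d)

theorem SW2sq_mul_natCast_le_of_coupling {d : ℕ} {μ ν : Measure (Euc d)}
    {γ : Measure (Euc d × Euc d)} [SFinite γ]
    (hγ₁ : γ.map Prod.fst = μ) (hγ₂ : γ.map Prod.snd = ν) :
    SW2sq μ ν * d ≤ ∫⁻ p, ENNReal.ofReal (‖p.1 - p.2‖ ^ 2) ∂γ := by
  have hproj : ∀ θ : Euc d, Measurable (proj θ) := fun θ => by unfold proj; fun_prop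
  calc SW2sq μ ν * d
      ≤ d * ∫⁻ θ, ∫⁻ p, ENNReal.ofReal (⟪θ, p.1 - p.2⟫ ^ 2) ∂γ ∂(sphereUniform d) := by
        rw [mul_comm]
        gcongr
        refine lintegral_mono fun θ => ?_
        simpa [proj, inner_sub_right] using W2sq_map_le_s7 hγ₁ hγ₂ (hproj θ)
    _ = d * ∫⁻ p, ∫⁻ θ, ENNReal.ofReal (⟪θ, p.1 - p.2⟫ ^ 2) ∂(sphereUniform d) ∂γ := by
        rw [lintegral_lintegral_swap (by fun_prop)]
    _ ≤ ∫⁻ p, d * ∫⁻ θ, ENNReal.ofReal (⟪θ, p.1 - p.2⟫ ^ 2) ∂(sphereUniform d) ∂γ :=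
        lintegral_const_mul_le _ _
    _ ≤ ∫⁻ p, ENNReal.ofReal (‖p.1 - p.2‖ ^ 2) ∂γ :=
        lintegral_mono fun p => natCast_mul_lintegral_inner_sq_sphereUniform_le _

theorem stmt7_general {d : ℕ} (μ ν : Measure (Euc d))
    [IsProbabilityMeasure μ] :
    SW2sq μ ν ≤ W2sq μ ν / (d : ℝ≥0∞) := by
  rcases d.eq_zero_or_pos with rfl | hd
  · simp [SW2sq, sphereUniform_zero]
  rw [ENNReal.le_div_iff_mul_le (by simp [hd.ne']) (by simp), W2sq]
  refine le_iInf₂ fun γ ⟨hγ₁, hγ₂⟩ => ?_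
  have : IsFiniteMeasure (γ.map Prod.fst) := by rw [hγ₁]; infer_instance
  have : IsFiniteMeasure γ := Measure.isFiniteMeasure_of_map measurable_fst.aemeasurable
  exact SW2sq_mul_natCast_le_of_coupling hγ₁ hγ₂

theorem stmt7 {d : ℕ} (hd : 0 < d) (μ ν : Measure (Euc d))
    [IsProbabilityMeasure μ] [IsProbabilityMeasure ν]
    (h2μ : ∫⁻ x, ENNReal.ofReal (‖x‖ ^ 2) ∂μ < ∞)
    (h2ν : ∫⁻ x, ENNReal.ofReal (‖x‖ ^ 2) ∂ν < ∞) :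
    SW2sq μ ν ≤ W2sq μ ν / (d : ℝ≥0∞) :=
  stmt7_general μ ν
end
end
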